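/- arXiv:2601.03585 — 5 statements merged into one kernel-verified Lean document; each statement's English description precedes it below -/
import Mathlib

section
/- Fix n ≥ 1. Let M be a symmetric positive definite real n×n matrix, let N be a nonzero symmetric positive semidefinite real n×n matrix, and let c₁, c₂ ∈ ℝ. If in the exterior algebra ⋀(ℝ^{2n}) both v₁ ∧ (c₁·v₂ + c₂·Λ_M) = 0 and τ(N) ∧ (c₁·v₂ + c₂·Λ_M) = 0, then c₁ = 0 and c₂ = 0. -/
/-!
Pair everything with `topCoeff`, the coefficient of `e₁ ∧ ⋯ ∧ e_{2n}`. Writing an `n`-fold wedge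
of vectors as the rows `[A | B]` of an `n × 2n` matrix, the top coefficient of a product of two
such wedges is the determinant of the block matrix `[A B; C D]`. This gives
`v₁ ∧ v₂ ↦ 1`, `v₁ ∧ Λ_M ↦ det M`, `τ(N) ∧ v₂ ↦ 0` and, by a Schur complement,
`τ(N) ∧ Λ_M ↦ -det M · tr(M⁻¹ N)`. Hence `c₁ + c₂ det M = 0` and `c₂ det M tr(M⁻¹ N) = 0`,
and `tr(M⁻¹ N) > 0` because `M⁻¹` is positive definite and `N ≠ 0` is positive semidefinite.
-/

noncomputable section ExteriorSetup

/-- The exterior algebra `⋀(ℝ^{2n})`. -/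
abbrev EA (n : ℕ) := ExteriorAlgebra ℝ (Fin (2 * n) → ℝ)

/-- The `i`-th standard basis vector of `ℝ^{2n}`. -/
def stdv (n : ℕ) (i : Fin (2 * n)) : Fin (2 * n) → ℝ := Pi.single i 1

/-- The image of the `i`-th standard basis vector in the exterior algebra. -/
def e (n : ℕ) (i : Fin (2 * n)) : EA n := ExteriorAlgebra.ι ℝ (stdv n i)

/-- The index `i` (for `0 ≤ i < n`) viewed in `Fin (2n)`. -/
def lo (n : ℕ) (i : Fin n) : Fin (2 * n) := ⟨i.1, by have := i.isLt; omega⟩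

/-- The index `n + i` (for `0 ≤ i < n`) viewed in `Fin (2n)`. -/
def hi (n : ℕ) (i : Fin n) : Fin (2 * n) := ⟨n + i.1, by have := i.isLt; omega⟩

/-- `vol = e₁ ∧ ⋯ ∧ e_{2n}`. -/
def vol (n : ℕ) : EA n := (List.ofFn fun i : Fin (2 * n) => e n i).prod

/-- `v₁ = e₁ ∧ ⋯ ∧ e_n`. -/
def v₁ (n : ℕ) : EA n := (List.ofFn fun i : Fin n => e n (lo n i)).prod

/-- `v₂ = e_{n+1} ∧ ⋯ ∧ e_{2n}`. -/
def v₂ (n : ℕ) : EA n := (List.ofFn fun i : Fin n => e n (hi n i)).prod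

/-- `τ(N) = ∑_{i=1}^n e₁ ∧ ⋯ ∧ e_{i-1} ∧ (∑_{j=1}^n N_{ji} e_{n+j}) ∧ e_{i+1} ∧ ⋯ ∧ e_n`. -/
def tau (n : ℕ) (N : Matrix (Fin n) (Fin n) ℝ) : EA n :=
  ∑ i : Fin n,
    (List.ofFn fun k : Fin n =>
      if k = i then ExteriorAlgebra.ι ℝ (∑ j : Fin n, N j i • stdv n (hi n j))
      else e n (lo n k)).prod

/-- `Λ_M = (e₁ + ∑_j M_{j1} e_{n+j}) ∧ ⋯ ∧ (e_n + ∑_j M_{jn} e_{n+j})`,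
the Plücker vector of the graph Lagrangian `U_M·Span(e₁,…,e_n)`. -/
def LambdaW (n : ℕ) (M : Matrix (Fin n) (Fin n) ℝ) : EA n :=
  (List.ofFn fun i : Fin n =>
    ExteriorAlgebra.ι ℝ (stdv n (lo n i) + ∑ j : Fin n, M j i • stdv n (hi n j))).prod

end ExteriorSetup

open Matrix ExteriorAlgebra

namespace Matrix

variable {m R : Type*} [Fintype m] [DecidableEq m] [CommRing R]

lemma det_one_updateRow (i : m) (w : m → R) : ((1 : Matrix m m R).updateRow i w).det = w i := by
  rw [← det_transpose, ← updateCol_transpose, transpose_one, ← cramer_apply, cramer_one]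
  rfl

/-- The Schur complement of `D` is `1` with its `i`-th row replaced by `-(w ᵥ* D⁻¹)`. -/
lemma det_fromBlocks_updateRow_one_updateRow_zero (D : Matrix m m R) [Invertible D] (i : m)
    (w : m → R) :
    (fromBlocks ((1 : Matrix m m R).updateRow i 0) ((0 : Matrix m m R).updateRow i w) 1 D).det =
      -(D.det * (w ᵥ* D⁻¹) i) := by
  rw [det_fromBlocks₂₂, Matrix.mul_one, updateRow_mul, Matrix.zero_mul, invOf_eq_nonsing_inv]
  have hschur : (1 : Matrix m m R).updateRow i 0 - (0 : Matrix m m R).updateRow i (w ᵥ* D⁻¹) =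
      (1 : Matrix m m R).updateRow i (-(w ᵥ* D⁻¹)) := by
    ext k l
    by_cases hk : k = i <;> simp [updateRow_apply, hk]
  rw [hschur, det_one_updateRow, Pi.neg_apply, mul_neg]

open scoped ComplexOrder MatrixOrder in
/-- Writing `P = Cᴴ C` with `C` invertible and `N = Bᴴ B`, `tr(P N) = tr((B Cᴴ)ᴴ (B Cᴴ))`. -/
lemma PosDef.trace_mul_pos {𝕜 : Type*} [RCLike 𝕜] {P N : Matrix m m 𝕜} (hP : P.PosDef)
    (hN : N.PosSemidef) (hN0 : N ≠ 0) : 0 < trace (P * N) := by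
  obtain ⟨C, hC, rfl⟩ :=
    CStarAlgebra.isStrictlyPositive_iff_eq_star_mul_self.mp hP.isStrictlyPositive
  obtain ⟨B, rfl⟩ := CStarAlgebra.nonneg_iff_eq_star_mul_self.mp hN.nonneg
  have htrace : trace (star C * C * (star B * B)) = trace ((B * star C)ᴴ * (B * star C)) := by
    simp only [conjTranspose_mul, star_eq_conjTranspose, conjTranspose_conjTranspose]
    rw [Matrix.mul_assoc, trace_mul_comm Cᴴ]
    simp only [Matrix.mul_assoc]
  rw [htrace]
  refine (posSemidef_conjTranspose_mul_self _).trace_nonneg.lt_of_ne' fun h => hN0 ?_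
  rw [trace_conjTranspose_mul_self_eq_zero_iff] at h
  lift C to (Matrix m m 𝕜)ˣ using hC
  have hB : B = 0 := by
    simpa [Matrix.mul_assoc, ← star_mul] using congr($h * (star (C⁻¹ : (Matrix m m 𝕜)ˣ) : _))
  simp [hB]

end Matrix

lemma ExteriorAlgebra.ιMulti_eq_comp_cast {R M : Type*} [CommRing R] [AddCommGroup M]
    [Module R M] {k l : ℕ} (h : k = l) (v : Fin l → M) :
    ιMulti R l v = ιMulti R k (v ∘ Fin.cast h) := by
  subst h
  rfl

noncomputable section

variable {n : ℕ}

def loHiEquiv (n : ℕ) : Fin n ⊕ Fin n ≃ Fin (2 * n) :=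
  finSumFinEquiv.trans (finCongr (two_mul n).symm)

lemma loHiEquiv_inl (i : Fin n) : loHiEquiv n (.inl i) = lo n i := by
  ext; simp [loHiEquiv, lo]

lemma loHiEquiv_inr (i : Fin n) : loHiEquiv n (.inr i) = hi n i := by
  ext; simp [loHiEquiv, hi, add_comm]

def blockVec (x y : Fin n → ℝ) : Fin (2 * n) → ℝ :=
  ∑ j, x j • stdv n (lo n j) + ∑ j, y j • stdv n (hi n j)

lemma blockVec_loHiEquiv (x y : Fin n → ℝ) (s : Fin n ⊕ Fin n) :
    blockVec x y (loHiEquiv n s) = Sum.elim x y s := by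
  simp only [blockVec, stdv, ← loHiEquiv_inl, ← loHiEquiv_inr]
  cases s <;> simp [Pi.single_apply]

/-- The wedge of the rows of the `n × 2n` matrix `[A | B]`. -/
def rowWedge (A B : Matrix (Fin n) (Fin n) ℝ) : EA n :=
  ιMulti ℝ n fun i => blockVec (A i) (B i)

/-- The coefficient of `vol` in the top degree; it vanishes in all lower degrees. -/
def topCoeff (n : ℕ) : EA n →ₗ[ℝ] ℝ :=
  liftAlternating (Function.update 0 (2 * n) detRowAlternating)

lemma topCoeff_ιMulti (v : Fin (2 * n) → Fin (2 * n) → ℝ) :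
    topCoeff n (ιMulti ℝ _ v) = (of v).det := by
  rw [topCoeff, liftAlternating_apply_ιMulti, Function.update_self]
  rfl

lemma topCoeff_rowWedge_mul_rowWedge (A B C D : Matrix (Fin n) (Fin n) ℝ) :
    topCoeff n (rowWedge A B * rowWedge C D) = (fromBlocks A B C D).det := by
  rw [rowWedge, rowWedge, ιMulti_mul_ιMulti, ιMulti_eq_comp_cast (two_mul n), topCoeff_ιMulti,
    ← det_submatrix_equiv_self (loHiEquiv n)]
  have happend (a b : Fin n → Fin (2 * n) → ℝ) (s : Fin n ⊕ Fin n) :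
      Fin.append a b (Fin.cast (two_mul n) (loHiEquiv n s)) = Sum.elim a b s := by
    cases s <;> simp only [loHiEquiv, Equiv.trans_apply, finCongr_apply, Fin.cast_cast,
      Fin.cast_eq_self, finSumFinEquiv_apply_left, finSumFinEquiv_apply_right, Fin.append_left,
      Fin.append_right, Sum.elim_inl, Sum.elim_inr]
  congr 1
  ext (s | s) (t | t) <;> simp [happend, blockVec_loHiEquiv]

lemma v₁_eq_rowWedge : v₁ n = rowWedge 1 0 := by
  simp [v₁, rowWedge, ιMulti_apply, e, blockVec, one_apply]

lemma v₂_eq_rowWedge : v₂ n = rowWedge 0 1 := by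
  simp [v₂, rowWedge, ιMulti_apply, e, blockVec, one_apply]

lemma LambdaW_eq_rowWedge (M : Matrix (Fin n) (Fin n) ℝ) : LambdaW n M = rowWedge 1 Mᵀ := by
  simp [LambdaW, rowWedge, ιMulti_apply, blockVec, one_apply]

lemma tau_eq_sum_rowWedge (N : Matrix (Fin n) (Fin n) ℝ) :
    tau n N = ∑ i, rowWedge ((1 : Matrix (Fin n) (Fin n) ℝ).updateRow i 0)
      ((0 : Matrix (Fin n) (Fin n) ℝ).updateRow i (Nᵀ i)) := by
  refine Finset.sum_congr rfl fun i _ => ?_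
  rw [rowWedge, ιMulti_apply]
  congr 1
  refine List.ofFn_inj.mpr (funext fun k => ?_)
  by_cases hk : k = i
  · simp [hk, blockVec]
  · simp [hk, blockVec, e, one_apply]

lemma topCoeff_v₁_mul_v₂ : topCoeff n (v₁ n * v₂ n) = 1 := by
  rw [v₁_eq_rowWedge, v₂_eq_rowWedge, topCoeff_rowWedge_mul_rowWedge, fromBlocks_one, det_one]

lemma topCoeff_v₁_mul_LambdaW (M : Matrix (Fin n) (Fin n) ℝ) :
    topCoeff n (v₁ n * LambdaW n M) = M.det := by
  rw [v₁_eq_rowWedge, LambdaW_eq_rowWedge, topCoeff_rowWedge_mul_rowWedge, det_fromBlocks_zero₁₂,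
    det_one, one_mul, det_transpose]

lemma topCoeff_tau_mul_v₂ (N : Matrix (Fin n) (Fin n) ℝ) : topCoeff n (tau n N * v₂ n) = 0 := by
  rw [tau_eq_sum_rowWedge, v₂_eq_rowWedge, Finset.sum_mul, map_sum]
  refine Finset.sum_eq_zero fun i _ => ?_
  rw [topCoeff_rowWedge_mul_rowWedge, det_fromBlocks_zero₂₁,
    det_eq_zero_of_row_eq_zero i (by simp), zero_mul]

lemma topCoeff_tau_mul_LambdaW (M N : Matrix (Fin n) (Fin n) ℝ) (hM : IsUnit M.det) :
    topCoeff n (tau n N * LambdaW n M) = -(M.det * trace (M⁻¹ * N)) := by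
  have : Invertible Mᵀ := Mᵀ.invertibleOfIsUnitDet (by rwa [det_transpose])
  simp only [tau_eq_sum_rowWedge, LambdaW_eq_rowWedge, Finset.sum_mul, map_sum,
    topCoeff_rowWedge_mul_rowWedge, det_fromBlocks_updateRow_one_updateRow_zero,
    ← transpose_nonsing_inv, vecMul_transpose, det_transpose, Finset.sum_neg_distrib,
    ← Finset.mul_sum]
  simp [trace, mul_apply, mulVec, dotProduct, mul_comm]

end

theorem hypertransversality_general (n : ℕ) (M N : Matrix (Fin n) (Fin n) ℝ)
    (hM : M.PosDef) (hN : N.PosSemidef) (hN0 : N ≠ 0) (c₁ c₂ : ℝ)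
    (h1 : v₁ n * (c₁ • v₂ n + c₂ • LambdaW n M) = 0)
    (h2 : tau n N * (c₁ • v₂ n + c₂ • LambdaW n M) = 0) :
    c₁ = 0 ∧ c₂ = 0 := by
  have hdet : 0 < M.det := hM.det_pos
  have htrace : 0 < trace (M⁻¹ * N) := hM.inv.trace_mul_pos hN hN0
  have hv₁ := congrArg (topCoeff n) h1
  have hτ := congrArg (topCoeff n) h2
  simp only [mul_add, mul_smul_comm, map_add, map_smul, map_zero, smul_eq_mul,
    topCoeff_v₁_mul_v₂, topCoeff_v₁_mul_LambdaW, topCoeff_tau_mul_v₂,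
    topCoeff_tau_mul_LambdaW M N hdet.ne'.isUnit] at hv₁ hτ
  have hc₂ : c₂ = 0 := by
    have hprod : c₂ * (M.det * trace (M⁻¹ * N)) = 0 := by linarith
    simpa [hdet.ne', htrace.ne'] using hprod
  exact ⟨by simpa [hc₂] using hv₁, hc₂⟩

/-- Proposition 3.2 (measurable (1,1,2)-hypertransversality), linear-algebraic content:
if `M` is symmetric positive definite, `N` is nonzero symmetric positive semidefinite,
and `c₁·v₂ + c₂·Λ_M` is annihilated under the wedge pairing by both `v₁` and `τ(N)`,
then `c₁ = c₂ = 0`; i.e. `Span(v₂) ⊕ Span(Λ_M) ⊕ Ann(Span(v₁, τ(N)))` is direct. -/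
theorem hypertransversality (n : ℕ) (hn : 1 ≤ n) (M N : Matrix (Fin n) (Fin n) ℝ)
    (hM : M.PosDef) (hN : N.PosSemidef) (hN0 : N ≠ 0) (c₁ c₂ : ℝ)
    (h1 : v₁ n * (c₁ • v₂ n + c₂ • LambdaW n M) = 0)
    (h2 : tau n N * (c₁ • v₂ n + c₂ • LambdaW n M) = 0) :
    c₁ = 0 ∧ c₂ = 0 :=
  hypertransversality_general n M N hM hN hN0 c₁ c₂ h1 h2
end

section
/- Fix n ≥ 1. For all real n×n matrices N and M, the following identities hold in the exterior algebra ⋀(ℝ^{2n}): v₁ ∧ v₂ = vol; τ(N) ∧ v₂ = 0; v₁ ∧ σ(M) = 0; and τ(N) ∧ σ(M) = −trace(N·M) · vol. -/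
noncomputable section ExteriorSetup

/-- `σ(M) = ∑_{i=1}^n e_{n+1} ∧ ⋯ ∧ e_{n+i-1} ∧ (∑_{j=1}^n M_{ji} e_j) ∧ e_{n+i+1} ∧ ⋯ ∧ e_{2n}`. -/
def sigmaW (n : ℕ) (M : Matrix (Fin n) (Fin n) ℝ) : EA n :=
  ∑ i : Fin n,
    (List.ofFn fun k : Fin n =>
      if k = i then ExteriorAlgebra.ι ℝ (∑ j : Fin n, M j i • stdv n (lo n j))
      else e n (hi n k)).prod

end ExteriorSetup

/-!
Each wedge product is `ιMulti` of the standard basis of `ℝ^{2n}` with one or two basis vectors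
replaced by linear combinations `∑ xₖ eₖ` of the basis. Since the wedge is alternating, replacing
slot `i` multiplies the volume form by `xᵢ`, and replacing two slots `i ≠ j` multiplies it by the
`2 × 2` minor `xᵢ yⱼ - xⱼ yᵢ`. In `τ(N)` the vector in a slot `i ≤ n` only involves `e_{n+1}, …,
e_{2n}`, and in `σ(M)` the vector in a slot `n + i'` only involves `e_1, …, e_n`; so the single
replacements in `τ(N) ∧ v₂` and `v₁ ∧ σ(M)` give `0`, and of the minor in `τ(N) ∧ σ(M)` only
`-N_{i'i} M_{ii'}` survives.
-/

open Function

namespace AlternatingMap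

section

variable {R M N ι : Type*} [Semiring R] [AddCommMonoid M] [Module R M] [AddCommGroup N]
  [Module R N] [DecidableEq ι] (f : M [⋀^ι]→ₗ[R] N) (v : ι → M)

theorem map_update_apply_eq_ite (i j : ι) :
    f (update v i (v j)) = if j = i then f v else 0 := by
  split_ifs with h
  · rw [h, update_eq_self]
  · exact f.map_update_self v (Ne.symm h)

theorem map_update_sum_smul [Fintype ι] (i : ι) (x : ι → R) :
    f (update v i (∑ k, x k • v k)) = x i • f v := by
  simp only [map_update_sum, map_update_smul, map_update_apply_eq_ite, smul_ite, smul_zero,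
    Finset.sum_ite_eq', Finset.mem_univ, if_true]

theorem map_update_update_apply_left {i j : ι} (hij : i ≠ j) (a : M) :
    f (update (update v i a) j (v i)) = -f (update v j a) := by
  have hswap : update v j a ∘ Equiv.swap i j = update (update v i a) j (v i) := by
    rw [Equiv.comp_swap_eq_update, update_self, update_of_ne hij, update_idem,
      update_comm (Ne.symm hij)]
  rw [← hswap, map_swap _ _ hij]

end

section

variable {R M N ι : Type*} [CommRing R] [AddCommMonoid M] [Module R M] [AddCommGroup N]
  [Module R N] [Fintype ι] [DecidableEq ι] (f : M [⋀^ι]→ₗ[R] N) (v : ι → M)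

theorem map_update_update_sum_smul {i j : ι} (hij : i ≠ j) (x y : ι → R) :
    f (update (update v i (∑ k, x k • v k)) j (∑ k, y k • v k)) =
      (x i * y j - x j * y i) • f v := by
  set a := ∑ k, x k • v k
  have hterm : ∀ l, f (update (update v i a) j (v l)) =
      if l = i then -(x j • f v) else if l = j then x i • f v else 0 := by
    intro l
    split_ifs with hli hlj
    · rw [hli, map_update_update_apply_left f v hij, map_update_sum_smul]
    · rw [← update_of_ne hli a v, map_update_apply_eq_ite, if_pos hlj, map_update_sum_smul]
    · rw [← update_of_ne hli a v, map_update_apply_eq_ite, if_neg hlj]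
  rw [map_update_sum, Fintype.sum_eq_add i j hij fun l hl => by
    rw [map_update_smul, hterm, if_neg hl.1, if_neg hl.2, smul_zero]]
  rw [map_update_smul, map_update_smul, hterm, hterm, if_pos rfl, if_neg (Ne.symm hij),
    if_pos rfl]
  module

end

end AlternatingMap

theorem Fin.castAdd_ne_natAdd {m n : ℕ} (i : Fin m) (j : Fin n) :
    Fin.castAdd n i ≠ Fin.natAdd m j := by
  simp only [ne_eq, Fin.ext_iff, Fin.val_castAdd, Fin.val_natAdd]
  omega

theorem Fin.append_update_left {α : Type*} {m n : ℕ} (f : Fin m → α) (g : Fin n → α) (i : Fin m)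
    (a : α) : Fin.append (update f i a) g = update (Fin.append f g) (Fin.castAdd n i) a := by
  ext k
  refine Fin.addCases (fun k => ?_) (fun k => ?_) k <;>
    simp [update_apply, (Fin.castAdd_ne_natAdd _ _).symm]

theorem Fin.append_update_right {α : Type*} {m n : ℕ} (f : Fin m → α) (g : Fin n → α) (i : Fin n)
    (a : α) : Fin.append f (update g i a) = update (Fin.append f g) (Fin.natAdd m i) a := by
  ext k
  refine Fin.addCases (fun k => ?_) (fun k => ?_) k <;>
    simp [update_apply, Fin.castAdd_ne_natAdd]

section

variable {R M : Type*} [Semiring R] [AddCommMonoid M] [Module R M] {m n : ℕ}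

theorem Fin.sum_smul_castAdd (c : Fin m → R) (u : Fin (m + n) → M) :
    ∑ j, c j • u (Fin.castAdd n j) = ∑ k, Fin.append c 0 k • u k := by
  simp [Fin.sum_univ_add]

theorem Fin.sum_smul_natAdd (c : Fin n → R) (u : Fin (m + n) → M) :
    ∑ j, c j • u (Fin.natAdd m j) = ∑ k, Fin.append 0 c k • u k := by
  simp [Fin.sum_univ_add]

end

theorem ExteriorAlgebra.prod_ofFn_ite_eq_ιMulti_update {R M : Type*} [CommRing R] [AddCommGroup M]
    [Module R M] {n : ℕ} (v : Fin n → M) (i : Fin n) (a : M) :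
    (List.ofFn fun k => if k = i then ι R a else ι R (v k)).prod = ιMulti R n (update v i a) := by
  simp only [ιMulti_apply, update_apply, apply_ite]

open ExteriorAlgebra

-- The standard basis indexed by `Fin (n + n)`, so that `Fin.castAdd`, `Fin.natAdd` pick out
-- `e_i`, `e_{n+i}`.
def stdvSplit (n : ℕ) (k : Fin (n + n)) : Fin (2 * n) → ℝ := stdv n (Fin.cast (two_mul n).symm k)

theorem vol_eq_ιMulti (n : ℕ) : vol n = ιMulti ℝ (n + n) (stdvSplit n) := by
  rw [ιMulti_apply, vol, List.ofFn_congr (two_mul n)]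
  rfl

theorem v₁_eq_ιMulti (n : ℕ) : v₁ n = ιMulti ℝ n fun i => stdvSplit n (Fin.castAdd n i) :=
  (ιMulti_apply _).symm

theorem v₂_eq_ιMulti (n : ℕ) : v₂ n = ιMulti ℝ n fun i => stdvSplit n (Fin.natAdd n i) :=
  (ιMulti_apply _).symm

theorem tau_eq_sum_ιMulti (n : ℕ) (N : Matrix (Fin n) (Fin n) ℝ) :
    tau n N = ∑ i, ιMulti ℝ n (update (fun k => stdvSplit n (Fin.castAdd n k)) i
      (∑ k, Fin.append 0 (fun j => N j i) k • stdvSplit n k)) := by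
  refine Finset.sum_congr rfl fun i _ => ?_
  rw [← Fin.sum_smul_natAdd, ← prod_ofFn_ite_eq_ιMulti_update]
  rfl

theorem sigmaW_eq_sum_ιMulti (n : ℕ) (M : Matrix (Fin n) (Fin n) ℝ) :
    sigmaW n M = ∑ i, ιMulti ℝ n (update (fun k => stdvSplit n (Fin.natAdd n k)) i
      (∑ k, Fin.append (fun j => M j i) 0 k • stdvSplit n k)) := by
  refine Finset.sum_congr rfl fun i _ => ?_
  rw [← Fin.sum_smul_castAdd, ← prod_ofFn_ite_eq_ιMulti_update]
  rfl

theorem wedge_pairings_general (n : ℕ) (N M : Matrix (Fin n) (Fin n) ℝ) :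
    v₁ n * v₂ n = vol n ∧
    tau n N * v₂ n = 0 ∧
    v₁ n * sigmaW n M = 0 ∧
    tau n N * sigmaW n M = (-(N * M).trace) • vol n := by
  have hvol := vol_eq_ιMulti n
  refine ⟨?_, ?_, ?_, ?_⟩
  · rw [v₁_eq_ιMulti, v₂_eq_ιMulti, ιMulti_mul_ιMulti, Fin.append_castAdd_natAdd, hvol]
  · rw [tau_eq_sum_ιMulti, v₂_eq_ιMulti, Finset.sum_mul]
    refine Finset.sum_eq_zero fun i _ => ?_
    rw [ιMulti_mul_ιMulti, Fin.append_update_left, Fin.append_castAdd_natAdd,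
      AlternatingMap.map_update_sum_smul, Fin.append_left, Pi.zero_apply, zero_smul]
  · rw [sigmaW_eq_sum_ιMulti, v₁_eq_ιMulti, Finset.mul_sum]
    refine Finset.sum_eq_zero fun i _ => ?_
    rw [ιMulti_mul_ιMulti, Fin.append_update_right, Fin.append_castAdd_natAdd,
      AlternatingMap.map_update_sum_smul, Fin.append_right, Pi.zero_apply, zero_smul]
  · calc tau n N * sigmaW n M = ∑ i, ∑ i', (-(N i' i * M i i')) • vol n := by
          rw [tau_eq_sum_ιMulti, sigmaW_eq_sum_ιMulti, Finset.sum_mul_sum]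
          refine Finset.sum_congr rfl fun i _ => Finset.sum_congr rfl fun i' _ => ?_
          rw [ιMulti_mul_ιMulti, Fin.append_update_right, Fin.append_update_left,
            Fin.append_castAdd_natAdd, AlternatingMap.map_update_update_sum_smul _ _
              (Fin.castAdd_ne_natAdd i i'), hvol]
          simp only [Fin.append_left, Fin.append_right, Pi.zero_apply, mul_zero, zero_sub]
      _ = (-(N * M).trace) • vol n := by
          simp only [← Finset.sum_smul, Finset.sum_neg_distrib, Matrix.trace, Matrix.diag,
            Matrix.mul_apply]
          rw [Finset.sum_comm]

/-- The pairing computations in Lemma 4.2 (Gromovproduct):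
`v₁ ∧ v₂ = vol`, `τ(N) ∧ v₂ = 0`, `v₁ ∧ σ(M) = 0`, and
`τ(N) ∧ σ(M) = −trace(N·M)·vol`. -/
theorem wedge_pairings (n : ℕ) (hn : 1 ≤ n) (N M : Matrix (Fin n) (Fin n) ℝ) :
    v₁ n * v₂ n = vol n ∧
    tau n N * v₂ n = 0 ∧
    v₁ n * sigmaW n M = 0 ∧
    tau n N * sigmaW n M = (-(N * M).trace) • vol n :=
  wedge_pairings_general n N M
end

section
/- Fix n ≥ 1. For any real n×n matrices P and Q, the identity Λ_P ∧ Λ_Q = det(Q − P)·vol holds in the exterior algebra ⋀(ℝ^{2n}). -/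
/-!
`Λ_P ∧ Λ_Q` is the wedge of the `2n` columns of the block matrix `(1 1; P Q)`. A wedge of `2n`
vectors in a `2n`-dimensional space is the determinant of their coordinate matrix times `vol`, and
by the Schur complement formula `det (1 1; P Q) = det (Q - P)`.
-/

open ExteriorAlgebra Matrix

theorem AlternatingMap.eq_basis_det_smulRight {R M N ι : Type*} [CommRing R]
    [AddCommGroup M] [Module R M] [AddCommGroup N] [Module R N] [Fintype ι] [DecidableEq ι]
    (b : Module.Basis ι R M) (f : M [⋀^ι]→ₗ[R] N) : f = b.det.smulRight (f b) := by
  refine b.ext_alternating fun i hi => ?_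
  let σ : Equiv.Perm ι := Equiv.ofBijective i (Finite.injective_iff_bijective.1 hi)
  change f (b ∘ σ) = b.det.smulRight (f b) (b ∘ σ)
  simp [AlternatingMap.map_perm, Module.Basis.det_self]

theorem ExteriorAlgebra.ιMulti_eq_basis_det_smul {R M : Type*} [CommRing R]
    [AddCommGroup M] [Module R M] {m : ℕ} (b : Module.Basis (Fin m) R M) (v : Fin m → M) :
    ιMulti R m v = b.det v • ιMulti R m b := by
  conv_lhs => rw [AlternatingMap.eq_basis_det_smulRight b (ιMulti R m)]
  rfl

section LagrangianGraphs

variable {n : ℕ}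

def loHi (n : ℕ) : Fin n ⊕ Fin n ≃ Fin (2 * n) :=
  finSumFinEquiv.trans (finCongr (two_mul n).symm)

lemma loHi_inl (i : Fin n) : loHi n (.inl i) = lo n i := rfl

lemma loHi_inr (i : Fin n) : loHi n (.inr i) = hi n i := rfl

lemma loHi_symm_lo (i : Fin n) : (loHi n).symm (lo n i) = .inl i :=
  (Equiv.symm_apply_eq _).mpr rfl

lemma loHi_symm_hi (i : Fin n) : (loHi n).symm (hi n i) = .inr i :=
  (Equiv.symm_apply_eq _).mpr rfl

lemma ofFn_eq_ofFn_lo_append_ofFn_hi {α : Type*} (x : Fin (2 * n) → α) :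
    List.ofFn x = List.ofFn (x ∘ lo n) ++ List.ofFn (x ∘ hi n) := by
  rw [List.ofFn_congr (two_mul n), List.ofFn_add]
  rfl

def graphCol (M : Matrix (Fin n) (Fin n) ℝ) (i : Fin n) : Fin (2 * n) → ℝ :=
  stdv n (lo n i) + ∑ j, M j i • stdv n (hi n j)

lemma graphCol_apply_lo (M : Matrix (Fin n) (Fin n) ℝ) (i j : Fin n) :
    graphCol M i (lo n j) = (1 : Matrix (Fin n) (Fin n) ℝ) j i := by
  simp [graphCol, stdv, Pi.single_apply, ← loHi_inl, ← loHi_inr, (loHi n).injective.eq_iff,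
    one_apply]

lemma graphCol_apply_hi (M : Matrix (Fin n) (Fin n) ℝ) (i j : Fin n) :
    graphCol M i (hi n j) = M j i := by
  simp [graphCol, stdv, Pi.single_apply, ← loHi_inl, ← loHi_inr, (loHi n).injective.eq_iff]

/-- The `2n` columns of the block matrix `(1 1; P Q)`. -/
def graphPairCols (P Q : Matrix (Fin n) (Fin n) ℝ) (k : Fin (2 * n)) : Fin (2 * n) → ℝ :=
  Sum.elim (graphCol P) (graphCol Q) ((loHi n).symm k)

lemma graphPairCols_lo (P Q : Matrix (Fin n) (Fin n) ℝ) (i : Fin n) :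
    graphPairCols P Q (lo n i) = graphCol P i := by
  rw [graphPairCols, loHi_symm_lo, Sum.elim_inl]

lemma graphPairCols_hi (P Q : Matrix (Fin n) (Fin n) ℝ) (i : Fin n) :
    graphPairCols P Q (hi n i) = graphCol Q i := by
  rw [graphPairCols, loHi_symm_hi, Sum.elim_inr]

lemma LambdaW_eq_prod_graphCol (M : Matrix (Fin n) (Fin n) ℝ) :
    LambdaW n M = (List.ofFn fun i => ι ℝ (graphCol M i)).prod := rfl

lemma LambdaW_mul_LambdaW (P Q : Matrix (Fin n) (Fin n) ℝ) :
    LambdaW n P * LambdaW n Q = ιMulti ℝ (2 * n) (graphPairCols P Q) := by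
  rw [ιMulti_apply, ofFn_eq_ofFn_lo_append_ofFn_hi, List.prod_append, LambdaW_eq_prod_graphCol,
    LambdaW_eq_prod_graphCol]
  simp only [Function.comp_def, graphPairCols_lo, graphPairCols_hi]

lemma vol_eq_ιMulti_basisFun : vol n = ιMulti ℝ (2 * n) (Pi.basisFun ℝ (Fin (2 * n))) := by
  simp only [vol, e, stdv, ιMulti_apply, Pi.basisFun_apply]

lemma reindex_transpose_graphPairCols (P Q : Matrix (Fin n) (Fin n) ℝ) :
    reindex (loHi n).symm (loHi n).symm (of (graphPairCols P Q))ᵀ = fromBlocks 1 1 P Q := by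
  ext (r | r) (k | k) <;>
    simp only [reindex_apply, Equiv.symm_symm, submatrix_apply, transpose_apply, of_apply,
      loHi_inl, loHi_inr, graphPairCols_lo, graphPairCols_hi, graphCol_apply_lo,
      graphCol_apply_hi, fromBlocks_apply₁₁, fromBlocks_apply₁₂, fromBlocks_apply₂₁,
      fromBlocks_apply₂₂]

lemma det_graphPairCols (P Q : Matrix (Fin n) (Fin n) ℝ) :
    (of (graphPairCols P Q)).det = (Q - P).det := by
  rw [← det_transpose, ← det_reindex_self (loHi n).symm, reindex_transpose_graphPairCols,
    det_fromBlocks_one₁₁, mul_one]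

end LagrangianGraphs

theorem wedge_lagrangian_graphs_general (n : ℕ)
    (P Q : Matrix (Fin n) (Fin n) ℝ) :
    LambdaW n P * LambdaW n Q = (Q - P).det • vol n := by
  rw [LambdaW_mul_LambdaW, vol_eq_ιMulti_basisFun, ιMulti_eq_basis_det_smul (Pi.basisFun ℝ _),
    Pi.basisFun_det_apply, det_graphPairCols]

/-- The fundamental shadow computation of Lemma 5.3 (leminacute):
`Λ_P ∧ Λ_Q = det(Q − P)·vol`, i.e. `ω′(U_P v₁, U_Q v₁) = det(Q − P)`. -/
theorem wedge_lagrangian_graphs (n : ℕ) (hn : 1 ≤ n)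
    (P Q : Matrix (Fin n) (Fin n) ℝ) :
    LambdaW n P * LambdaW n Q = (Q - P).det • vol n :=
  wedge_lagrangian_graphs_general n P Q
end

section
/- Fix n ≥ 2 and let N be any real n×n matrix. Then in the exterior algebra ⋀(ℝ^{2n}): v₁ ∧ τ(N) = 0; if n ≥ 3, then τ(N) ∧ τ(N) = 0; and if n = 2, then τ(N) ∧ τ(N) = −2·det(N)·vol. -/
/-!
The `i`-th summand of `τ(N)` is the wedge of `e_1, …, e_n` with `e_i` replaced by the `i`-th
column of `N`, placed in `Span(e_{n+1}, …, e_{2n})`. For `n ≥ 2` such a summand shares a vector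
with `v₁`, and for `n ≥ 3` any two summands share one, so these products vanish by alternation.
For `n = 2`, `τ(N) = u ∧ e₂ + e₁ ∧ w` with `u, w` the columns of `N` in `Span(e₃, e₄)`; the two
summands are even, hence commute, which gives `τ(N) ∧ τ(N) = -2 e₁ ∧ e₂ ∧ u ∧ w`, and
`u ∧ w = det N • e₃ ∧ e₄`.
-/

namespace ExteriorAlgebra

variable {R M : Type*} [CommRing R] [AddCommGroup M] [Module R M]

theorem ιMulti_mul_ιMulti_eq_zero_of_eq {m n : ℕ} (a : Fin m → M) (b : Fin n → M)
    {i : Fin m} {j : Fin n} (h : a i = b j) : ιMulti R m a * ιMulti R n b = 0 := by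
  rw [ιMulti_mul_ιMulti]
  refine (ιMulti R (m + n)).map_eq_zero_of_eq _ (i := Fin.castAdd n i) (j := Fin.natAdd m j)
    (by simp [h]) (Fin.ne_of_lt ?_)
  simp only [Fin.lt_def, Fin.val_castAdd, Fin.val_natAdd]
  omega

theorem ι_mul_ι_anticomm (x y : M) : ι R x * ι R y = -(ι R y * ι R x) :=
  eq_neg_of_add_eq_zero_left (ι_add_mul_swap x y)

theorem commute_ι_mul_ι_ι (x y z : M) : Commute (ι R x * ι R y) (ι R z) := by
  rw [Commute, SemiconjBy, mul_assoc, ι_mul_ι_anticomm y z, mul_neg, ← mul_assoc,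
    ι_mul_ι_anticomm x z, neg_mul, neg_neg, mul_assoc]

theorem ι_mul_ι_mul_self (x y : M) : ι R x * ι R y * (ι R x * ι R y) = 0 := by
  rw [← mul_assoc, (commute_ι_mul_ι_ι x y x).eq, ← mul_assoc (ι R x) (ι R x), ι_sq_zero,
    zero_mul, zero_mul]

theorem ι_mul_ι_add_ι_mul_ι_mul_self (a b u w : M) :
    (ι R u * ι R b + ι R a * ι R w) * (ι R u * ι R b + ι R a * ι R w) =
      -(2 : R) • (ι R a * ι R b * (ι R u * ι R w)) := by
  have hcomm : Commute (ι R a * ι R w) (ι R u * ι R b) :=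
    ((commute_ι_mul_ι_ι u b a).mul_right (commute_ι_mul_ι_ι u b w)).symm
  have hcross : ι R u * ι R b * (ι R a * ι R w) = -(ι R a * ι R b * (ι R u * ι R w)) := by
    rw [← mul_assoc, (commute_ι_mul_ι_ι u b a).eq, mul_assoc (ι R a), ι_mul_ι_anticomm u b]
    noncomm_ring
  rw [add_mul, mul_add, mul_add, ι_mul_ι_mul_self, ι_mul_ι_mul_self, hcomm.eq, hcross]
  module

theorem ι_smul_add_smul_mul_ι_smul_add_smul (c d : M) (p q r s : R) :
    ι R (p • c + q • d) * ι R (r • c + s • d) = (p * s - q * r) • (ι R c * ι R d) := by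
  simp only [map_add, map_smul, add_mul, mul_add, smul_mul_smul, ι_sq_zero, smul_zero,
    ι_mul_ι_anticomm d c]
  module

end ExteriorAlgebra

open ExteriorAlgebra

def lowerFrame (n : ℕ) (k : Fin n) : Fin (2 * n) → ℝ := stdv n (lo n k)

def graphColumn (n : ℕ) (N : Matrix (Fin n) (Fin n) ℝ) (i : Fin n) : Fin (2 * n) → ℝ :=
  ∑ j : Fin n, N j i • stdv n (hi n j)

theorem v₁_eq_ιMulti_s6 (n : ℕ) : v₁ n = ιMulti ℝ n (lowerFrame n) := rfl

theorem tau_eq_sum_ιMulti_s6 (n : ℕ) (N : Matrix (Fin n) (Fin n) ℝ) :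
    tau n N = ∑ i, ιMulti ℝ n (Function.update (lowerFrame n) i (graphColumn n N i)) := by
  simp only [tau, ιMulti_apply, Function.update_apply, apply_ite (ι ℝ)]
  rfl

theorem v₁_mul_tau (n : ℕ) (hn : 2 ≤ n) (N : Matrix (Fin n) (Fin n) ℝ) :
    v₁ n * tau n N = 0 := by
  have : Nontrivial (Fin n) := Fin.nontrivial_iff_two_le.mpr hn
  rw [tau_eq_sum_ιMulti_s6, Finset.mul_sum, v₁_eq_ιMulti_s6]
  refine Finset.sum_eq_zero fun i _ => ?_
  obtain ⟨k, hk⟩ := exists_ne i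
  exact ιMulti_mul_ιMulti_eq_zero_of_eq _ _ (i := k) (j := k)
    (Function.update_of_ne hk _ _).symm

theorem tau_mul_tau_of_three_le (n : ℕ) (hn : 3 ≤ n) (N : Matrix (Fin n) (Fin n) ℝ) :
    tau n N * tau n N = 0 := by
  rw [tau_eq_sum_ιMulti_s6, Finset.sum_mul_sum]
  refine Finset.sum_eq_zero fun i _ => Finset.sum_eq_zero fun i' _ => ?_
  obtain ⟨k, hk⟩ : ({i, i'} : Finset (Fin n))ᶜ.Nonempty := by
    rw [← Finset.card_pos, Finset.card_compl, Fintype.card_fin]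
    have := Finset.card_le_two (a := i) (b := i')
    omega
  simp only [Finset.mem_compl, Finset.mem_insert, Finset.mem_singleton, not_or] at hk
  exact ιMulti_mul_ιMulti_eq_zero_of_eq _ _ (i := k) (j := k)
    ((Function.update_of_ne hk.1 _ _).trans (Function.update_of_ne hk.2 _ _).symm)

theorem tau_two (N : Matrix (Fin 2) (Fin 2) ℝ) :
    tau 2 N = ι ℝ (graphColumn 2 N 0) * e 2 1 + e 2 0 * ι ℝ (graphColumn 2 N 1) := by
  simp [tau, graphColumn, e, lo, List.ofFn_succ]

theorem tau_mul_tau_of_eq_two (N : Matrix (Fin 2) (Fin 2) ℝ) :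
    tau 2 N * tau 2 N = (-(2 * N.det)) • vol 2 := by
  have hvol : vol 2 = e 2 0 * e 2 1 * (e 2 (hi 2 0) * e 2 (hi 2 1)) := by
    simp only [vol, List.ofFn_succ, List.ofFn_zero, List.prod_cons, List.prod_nil, mul_one,
      mul_assoc]
    rfl
  have hcol : ∀ i, graphColumn 2 N i = N 0 i • stdv 2 (hi 2 0) + N 1 i • stdv 2 (hi 2 1) :=
    fun i => Fin.sum_univ_two _
  rw [tau_two, e, e, ι_mul_ι_add_ι_mul_ι_mul_self, hcol, hcol,
    ι_smul_add_smul_mul_ι_smul_add_smul, hvol, Matrix.det_fin_two]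
  simp only [e, mul_smul_comm]
  module

/-- Remark 3.3: for the tangent plane `Span(v₁, τ(N))` of the limit curve one has
`v₁ ∧ τ(N) = 0`; the form `ω′` restricted to this plane vanishes identically when
`n ≥ 3`, i.e. `τ(N) ∧ τ(N) = 0`, while for `n = 2` one has
`τ(N) ∧ τ(N) = −2·det(N)·vol`. -/
theorem tangent_plane_pairings (n : ℕ) (hn : 2 ≤ n) (N : Matrix (Fin n) (Fin n) ℝ) :
    v₁ n * tau n N = 0 ∧
    (3 ≤ n → tau n N * tau n N = 0) ∧
    (n = 2 → tau n N * tau n N = (-(2 * N.det)) • vol n) := by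
  refine ⟨v₁_mul_tau n hn N, fun h3 => tau_mul_tau_of_three_le n h3 N, ?_⟩
  rintro rfl
  exact tau_mul_tau_of_eq_two N
end

section
/- Fix n ≥ 1. For every finite family A₁, …, A_k of symmetric positive semidefinite real n×n matrices, ∑_{i=1}^k ‖A_i‖_F ≤ √n · ‖∑_{i=1}^k A_i‖_F, where ‖X‖_F := √(trace(Xᵀ·X)) is the Frobenius norm. -/
/-!
For a positive semidefinite `A`, every principal `2 × 2` minor is nonnegative, so
`A i j ^ 2 ≤ A i i * A j j`; summing over `i, j` gives `‖A‖_F ≤ trace A`. The trace is additive,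
and Cauchy–Schwarz on the diagonal gives `trace S ≤ √n · ‖S‖_F` for every `n × n` matrix `S`.
-/

open Matrix

namespace Matrix

variable {m n : Type*}

theorem trace_transpose_mul_self_eq_sum_sq {R : Type*} [CommSemiring R] [Fintype m] [Fintype n]
    (A : Matrix m n R) :
    (Aᵀ * A).trace = ∑ i, ∑ j, A i j ^ 2 := by
  rw [trace, Finset.sum_comm]
  simp only [diag_apply, mul_apply, transpose_apply, sq]

theorem PosSemidef.sq_apply_le_mul_diag {A : Matrix n n ℝ} (hA : A.PosSemidef) (i j : n) :
    A i j ^ 2 ≤ A i i * A j j := by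
  have hdet := (hA.submatrix ![i, j]).det_nonneg
  have hsymm : A j i = A i j := by simpa using congrFun (congrFun hA.1 i) j
  rw [det_fin_two] at hdet
  simp only [submatrix_apply, cons_val_zero, cons_val_one] at hdet
  rw [hsymm, ← sq] at hdet
  linarith

theorem PosSemidef.trace_transpose_mul_self_le_sq_trace [Fintype n] {A : Matrix n n ℝ}
    (hA : A.PosSemidef) :
    (Aᵀ * A).trace ≤ A.trace ^ 2 := by
  rw [trace_transpose_mul_self_eq_sum_sq, trace, sq, Finset.sum_mul_sum]
  exact Finset.sum_le_sum fun i _ => Finset.sum_le_sum fun j _ => hA.sq_apply_le_mul_diag i j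

theorem PosSemidef.sqrt_trace_transpose_mul_self_le_trace [Fintype n] {A : Matrix n n ℝ}
    (hA : A.PosSemidef) :
    √(Aᵀ * A).trace ≤ A.trace :=
  (Real.sqrt_le_left hA.trace_nonneg).mpr hA.trace_transpose_mul_self_le_sq_trace

theorem sq_trace_le_card_mul_trace_transpose_mul_self [Fintype n] (A : Matrix n n ℝ) :
    A.trace ^ 2 ≤ Fintype.card n * (Aᵀ * A).trace := by
  have hdiag : ∑ i, A i i ^ 2 ≤ ∑ i, ∑ j, A j i ^ 2 :=
    Finset.sum_le_sum fun i _ =>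
      Finset.single_le_sum (f := fun j => A j i ^ 2) (fun j _ => sq_nonneg _) (Finset.mem_univ i)
  calc A.trace ^ 2 ≤ Fintype.card n * ∑ i, A i i ^ 2 := sq_sum_le_card_mul_sum_sq
    _ ≤ Fintype.card n * (Aᵀ * A).trace := by
      rw [trace_transpose_mul_self_eq_sum_sq, Finset.sum_comm]
      gcongr

theorem trace_le_sqrt_card_mul_sqrt_trace_transpose_mul_self [Fintype n] (A : Matrix n n ℝ) :
    A.trace ≤ √(Fintype.card n) * √(Aᵀ * A).trace := by
  rw [← Real.sqrt_mul (Nat.cast_nonneg _)]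
  exact (le_abs_self _).trans (Real.abs_le_sqrt (sq_trace_le_card_mul_trace_transpose_mul_self A))

end Matrix

theorem sum_frobenius_le_sqrt_n_mul_frobenius_sum_general (n : ℕ)
    (k : ℕ) (A : Fin k → Matrix (Fin n) (Fin n) ℝ)
    (hA : ∀ i, (A i).PosSemidef) :
    ∑ i, Real.sqrt (((A i)ᵀ * A i).trace) ≤
      Real.sqrt n * Real.sqrt (((∑ i, A i)ᵀ * ∑ i, A i).trace) :=
  calc ∑ i, √((A i)ᵀ * A i).trace
      ≤ ∑ i, (A i).trace :=
        Finset.sum_le_sum fun i _ => (hA i).sqrt_trace_transpose_mul_self_le_trace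
    _ = (∑ i, A i).trace := (trace_sum _ _).symm
    _ ≤ √n * √((∑ i, A i)ᵀ * ∑ i, A i).trace := by
      simpa using trace_le_sqrt_card_mul_sqrt_trace_transpose_mul_self (∑ i, A i)

/-- Acuteness of the positive semidefinite cone, underlying Lemma 5.3: for any
finite family `A₁, …, A_k` of symmetric positive semidefinite real `n × n`
matrices, `∑ ‖A_i‖_F ≤ √n · ‖∑ A_i‖_F`, where `‖X‖_F = √(trace(Xᵀ·X))` is the
Frobenius norm. -/
theorem sum_frobenius_le_sqrt_n_mul_frobenius_sum (n : ℕ) (hn : 1 ≤ n)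
    (k : ℕ) (A : Fin k → Matrix (Fin n) (Fin n) ℝ)
    (hA : ∀ i, (A i).PosSemidef) :
    ∑ i, Real.sqrt (((A i)ᵀ * A i).trace) ≤
      Real.sqrt n * Real.sqrt (((∑ i, A i)ᵀ * ∑ i, A i).trace) :=
  sum_frobenius_le_sqrt_n_mul_frobenius_sum_general n k A hA
end
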